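/- Recursive equations for rewrite/rewrite substitution, up to permutation equivalence: given Γ ⊢ σ : q₀ → q₁ : A, (1) if Γ, x:A, y:B ⊢ ρ : s₀ → s₁ : C then (λy.ρ)⟦x\σ⟧ ≈ λy.(ρ⟦x\σ⟧); (2) if Γ, x:A ⊢ ρ₁ : s₀ → s₁ : B → C and Γ, x:A ⊢ ρ₂ : t₀ → t₁ : B then (ρ₁ ρ₂)⟦x\σ⟧ ≈ ρ₁⟦x\σ⟧ ρ₂⟦x\σ⟧; (3) if Γ, x:A ⊢ ρ₁ : s₀ → s₁ : B, Γ, x:A ⊢ ρ₂ : s₁ → s₂ : B, Γ ⊢ σ₁ : t₀ → t₁ : A and Γ ⊢ σ₂ : t₁ → t₂ : A, then (ρ₁;ρ₂)⟦x\(σ₁;σ₂)⟧ ≈ ρ₁⟦x\σ₁⟧ ; ρ₂⟦x\σ₂⟧. -/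
import Mathlib


namespace HOR

/-- Simple types over a set of base types `B`. -/
inductive Ty (B : Type) : Type
  | base : B → Ty B
  | arrow : Ty B → Ty B → Ty B

/-- Simply-typed λ-terms (de Bruijn representation) over a set of constants `C`. -/
inductive Tm (B C : Type) : Type
  | var : ℕ → Tm B C
  | const : C → Tm B C
  | lam : Tm B C → Tm B C
  | app : Tm B C → Tm B C → Tm B C

variable {B C R : Type}

namespace Tm

/-- Shift the free variables with index `≥ c` up by `d`. -/
def shift (d : ℕ) : ℕ → Tm B C → Tm B C
  | c, .var n => if n < c then .var n else .var (n + d)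
  | _, .const k => .const k
  | c, .lam t => .lam (shift d (c+1) t)
  | c, .app t u => .app (shift d c t) (shift d c u)

/-- Capture-avoiding substitution of the term `u` for the variable `k`. -/
def subst : Tm B C → ℕ → Tm B C → Tm B C
  | .var n, k, u => if n = k then shift k 0 u else if k < n then .var (n-1) else .var n
  | .const c, _, _ => .const c
  | .lam t, k, u => .lam (subst t (k+1) u)
  | .app t s, k, u => .app (subst t k u) (subst s k u)

/-- Iterated abstraction `λⁿ.t`. -/
def lamN : ℕ → Tm B C → Tm B C
  | 0, t => t
  | n+1, t => .lam (lamN n t)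

/-- Iterated application `t u₁ ⋯ uₙ`. -/
def apps : Tm B C → List (Tm B C) → Tm B C
  | t, [] => t
  | t, u :: us => apps (.app t u) us

/-- Parallel (simultaneous) substitution. -/
def psubst : (ℕ → Tm B C) → Tm B C → Tm B C
  | σ, .var n => σ n
  | _, .const c => .const c
  | σ, .lam t => .lam (psubst (fun n => match n with | 0 => .var 0 | m+1 => shift 1 0 (σ m)) t)
  | σ, .app t u => .app (psubst σ t) (psubst σ u)

/-- Number of free occurrences of variable `k`. -/
def varCount : Tm B C → ℕ → ℕ
  | .var n, k => if n = k then 1 else 0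
  | .const _, _ => 0
  | .lam t, k => varCount t (k+1)
  | .app t u, k => varCount t k + varCount u k

/-- Head of a term (spine head). -/
def head : Tm B C → Tm B C
  | .app t _ => head t
  | t => t

end Tm

/-- One-step β- or η-reduction, closed under arbitrary contexts. -/
inductive BetaEtaStep : Tm B C → Tm B C → Prop
  | beta : BetaEtaStep (.app (.lam t) u) (t.subst 0 u)
  | eta : BetaEtaStep (.lam (.app (Tm.shift 1 0 t) (.var 0))) t
  | lam : BetaEtaStep t t' → BetaEtaStep (.lam t) (.lam t')
  | appL : BetaEtaStep t t' → BetaEtaStep (.app t u) (.app t' u)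
  | appR : BetaEtaStep u u' → BetaEtaStep (.app t u) (.app t u')

/-- βη-equivalence of terms (the equivalence closure of one-step βη-reduction). -/
def BetaEtaEq : Tm B C → Tm B C → Prop :=
  Relation.ReflTransGen (fun a b => BetaEtaStep a b ∨ BetaEtaStep b a)

/-- Typing of terms (simply-typed λ-calculus over a signature `sig`). -/
inductive TmTy (sig : C → Ty B) : List (Ty B) → Tm B C → Ty B → Prop
  | var : Γ[n]? = some A → TmTy sig Γ (.var n) A
  | const : TmTy sig Γ (.const c) (sig c)
  | lam : TmTy sig (A :: Γ) t B' → TmTy sig Γ (.lam t) (.arrow A B')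
  | app : TmTy sig Γ t (.arrow A B') → TmTy sig Γ u A → TmTy sig Γ (.app t u) B'

mutual
  /-- η-long β-normal (i.e. βη̄-normal) forms. -/
  inductive LongNF {B C : Type} (sig : C → Ty B) : List (Ty B) → Tm B C → Ty B → Prop
    | lam : LongNF sig (A :: Γ) t B' → LongNF sig Γ (.lam t) (.arrow A B')
    | neutral : NeutralNF sig Γ t (.base b) → LongNF sig Γ t (.base b)
  /-- Neutral spines: a variable or constant applied to η-long β-normal arguments. -/
  inductive NeutralNF {B C : Type} (sig : C → Ty B) : List (Ty B) → Tm B C → Ty B → Prop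
    | var : Γ[n]? = some A → NeutralNF sig Γ (.var n) A
    | const : NeutralNF sig Γ (.const c) (sig c)
    | app : NeutralNF sig Γ t (.arrow A B') → LongNF sig Γ u A → NeutralNF sig Γ (.app t u) B'
end

/-- `A = A₁ → ⋯ → Aₙ → β` for some base type `β`. -/
def Ty.baseAfter : ℕ → Ty B → Prop
  | 0, A => ∃ b, A = Ty.base b
  | n+1, A => ∃ A₁ A₂, A = Ty.arrow A₁ A₂ ∧ Ty.baseAfter n A₂

/-- `t` is η-equivalent to the locally bound variable `i < b`. -/
def EtaBoundVar (b : ℕ) (t : Tm B C) (i : ℕ) : Prop :=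
  i < b ∧ BetaEtaEq t (.var i)

/-- Pattern condition for the body of a left-hand side with `n` metavariables,
under `b` local binders: every occurrence of a metavariable is applied to
terms η-equivalent to pairwise distinct locally bound variables. -/
inductive PatternBody (n : ℕ) : ℕ → Tm B C → Prop
  | lam : PatternBody n (b+1) t → PatternBody n b (.lam t)
  | rigidVar : i < b → (∀ u ∈ args, PatternBody n b u) →
      PatternBody n b (Tm.apps (.var i) args)
  | rigidConst : (∀ u ∈ args, PatternBody n b u) →
      PatternBody n b (Tm.apps (.const c) args)
  | flex : b ≤ m → m < b + n →
      (∃ is : List ℕ, is.Nodup ∧ List.Forall₂ (EtaBoundVar b) args is) →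
      PatternBody n b (Tm.apps (.var m) args)

/-- A Higher-order Rewriting System: a signature together with a set of rules
`⟨ϱ, ℓ, r⟩` (indexed by the rule symbols `R`), stored in closed form
`λx₁…xₙ.ℓ`, `λx₁…xₙ.r`, where `ℓ, r` are βη̄-normal terms of the same base type,
`ℓ` is a pattern that is not η-equivalent to a variable, and `fv(r) ⊆ fv(ℓ)`
(ensured by closedness of both sides over the same variables). -/
structure HRS (B C R : Type) where
  sig : C → Ty B
  nargs : R → ℕ
  lhsBody : R → Tm B C
  rhsBody : R → Tm B C
  ruleTy : R → Ty B
  rule_base : ∀ r, Ty.baseAfter (nargs r) (ruleTy r)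
  lhs_nf : ∀ r, LongNF sig [] (Tm.lamN (nargs r) (lhsBody r)) (ruleTy r)
  rhs_nf : ∀ r, LongNF sig [] (Tm.lamN (nargs r) (rhsBody r)) (ruleTy r)
  lhs_pattern : ∀ r, PatternBody (nargs r) 0 (lhsBody r)
  lhs_not_var : ∀ r i, ¬ BetaEtaEq (lhsBody r) (Tm.var i)

/-- The closed left-hand side `λx₁…xₙ.ℓ` of a rule. -/
def HRS.lhs (S : HRS B C R) (r : R) : Tm B C := Tm.lamN (S.nargs r) (S.lhsBody r)

/-- The closed right-hand side `λx₁…xₙ.r` of a rule. -/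
def HRS.rhs (S : HRS B C R) (r : R) : Tm B C := Tm.lamN (S.nargs r) (S.rhsBody r)

/-- Left-linearity: every variable of the left-hand side occurs exactly once. -/
def LeftLinear (S : HRS B C R) : Prop :=
  ∀ r, ∀ i < S.nargs r, Tm.varCount (S.lhsBody r) i = 1

/-- `u` occurs as a subterm under `k` binders. -/
inductive SubtermAt : Tm B C → ℕ → Tm B C → Prop
  | refl : SubtermAt t 0 t
  | lam : SubtermAt t k u → SubtermAt (.lam t) (k+1) u
  | appL : SubtermAt t k u → SubtermAt (.app t s) k u
  | appR : SubtermAt s k u → SubtermAt (.app t s) k u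

/-- No critical pairs: no non-variable subterm of a left-hand side unifies
(modulo βη, renaming apart) with a left-hand side, except trivially. -/
def NoCriticalPairs (S : HRS B C R) : Prop :=
  ∀ r₁ r₂ (k : ℕ) (u : Tm B C), SubtermAt (S.lhsBody r₁) k u →
    ¬ (∃ m, Tm.head u = Tm.var m ∧ k ≤ m) →
    (∃ σ₁ σ₂ : ℕ → Tm B C, (∀ i < k, σ₁ i = .var i) ∧ (∀ i < k, σ₂ i = .var i) ∧
        BetaEtaEq (Tm.psubst σ₁ u) (Tm.psubst σ₂ (Tm.shift k 0 (S.lhsBody r₂)))) →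
    (k = 0 ∧ u = S.lhsBody r₁ ∧ r₁ = r₂)

/-- An HRS is orthogonal when it is left-linear and has no critical pairs. -/
def Orthogonal (S : HRS B C R) : Prop := LeftLinear S ∧ NoCriticalPairs S

/-- The rewrite relation `→R` of an HRS on βη̄-normal terms:
root steps `θℓ → θr` closed under abstraction and application congruence. -/
inductive RStep (S : HRS B C R) : List (Ty B) → Ty B → Tm B C → Tm B C → Prop
  | root : LongNF S.sig Γ s A → LongNF S.sig Γ t A →
      args.length = S.nargs r →
      BetaEtaEq (Tm.apps (S.lhs r) args) s → BetaEtaEq (Tm.apps (S.rhs r) args) t →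
      RStep S Γ A s t
  | absC : RStep S (A :: Γ) B' s t → RStep S Γ (.arrow A B') (.lam s) (.lam t)
  | appL : RStep S Γ (.arrow A B') s t → TmTy S.sig Γ u A →
      RStep S Γ B' (.app s u) (.app t u)
  | appR : TmTy S.sig Γ s (.arrow A B') → RStep S Γ A u v →
      RStep S Γ B' (.app s u) (.app s v)

/-- Typed βη-equivalence judgment `Γ ⊢ s ≐ t : A`. -/
inductive TmEq (sig : C → Ty B) : List (Ty B) → Tm B C → Tm B C → Ty B → Prop
  | beta : TmTy sig (A :: Γ) s B' → TmTy sig Γ t A →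
      TmEq sig Γ (.app (.lam s) t) (s.subst 0 t) B'
  | eta : TmTy sig Γ s (.arrow A B') →
      TmEq sig Γ (.lam (.app (Tm.shift 1 0 s) (.var 0))) s (.arrow A B')
  | refl : TmTy sig Γ s A → TmEq sig Γ s s A
  | symm : TmEq sig Γ s t A → TmEq sig Γ t s A
  | trans : TmEq sig Γ s t A → TmEq sig Γ t u A → TmEq sig Γ s u A
  | congAbs : TmEq sig (A :: Γ) s t B' → TmEq sig Γ (.lam s) (.lam t) (.arrow A B')
  | congApp : TmEq sig Γ s s' (.arrow A B') → TmEq sig Γ t t' A →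
      TmEq sig Γ (.app s t) (.app s' t') B'

/-- Rewrites: variables, constants, rule symbols, abstraction and application
congruences, and composition `ρ;σ`. -/
inductive Rw (B C R : Type) : Type
  | var : ℕ → Rw B C R
  | const : C → Rw B C R
  | rule : R → Rw B C R
  | lam : Rw B C R → Rw B C R
  | app : Rw B C R → Rw B C R → Rw B C R
  | comp : Rw B C R → Rw B C R → Rw B C R

namespace Rw

/-- The source term of a rewrite. -/
def src (S : HRS B C R) : Rw B C R → Tm B C
  | .var n => .var n
  | .const c => .const c
  | .rule r => S.lhs r
  | .lam ρ => .lam (src S ρ)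
  | .app ρ σ => .app (src S ρ) (src S σ)
  | .comp ρ _ => src S ρ

/-- The target term of a rewrite. -/
def tgt (S : HRS B C R) : Rw B C R → Tm B C
  | .var n => .var n
  | .const c => .const c
  | .rule r => S.rhs r
  | .lam ρ => .lam (tgt S ρ)
  | .app ρ σ => .app (tgt S ρ) (tgt S σ)
  | .comp _ σ => tgt S σ

/-- Shift the free variables with index `≥ c` up by `d`. -/
def shiftR (d : ℕ) : ℕ → Rw B C R → Rw B C R
  | c, .var n => if n < c then .var n else .var (n + d)
  | _, .const k => .const k
  | _, .rule r => .rule r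
  | c, .lam ρ => .lam (shiftR d (c+1) ρ)
  | c, .app ρ σ => .app (shiftR d c ρ) (shiftR d c σ)
  | c, .comp ρ σ => .comp (shiftR d c ρ) (shiftR d c σ)

/-- Capture-avoiding substitution of the rewrite `ν` for the variable `k`.
When `ν` is (the coercion of) a term this is rewrite/term substitution `ρ{x\t}`,
and when the rewrite being substituted into is (the coercion of) a term this is
term/rewrite substitution `s⟨x\ρ⟩`. -/
def substR : Rw B C R → ℕ → Rw B C R → Rw B C R
  | .var n, k, ν => if n = k then shiftR k 0 ν else if k < n then .var (n-1) else .var n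
  | .const c, _, _ => .const c
  | .rule r, _, _ => .rule r
  | .lam ρ, k, ν => .lam (substR ρ (k+1) ν)
  | .app ρ σ, k, ν => .app (substR ρ k ν) (substR σ k ν)
  | .comp ρ σ, k, ν => .comp (substR ρ k ν) (substR σ k ν)

/-- Multisteps: rewrites with no occurrence of composition. -/
def IsMultistep : Rw B C R → Prop
  | .lam ρ => IsMultistep ρ
  | .app ρ σ => IsMultistep ρ ∧ IsMultistep σ
  | .comp _ _ => False
  | _ => True

/-- Iterated abstraction. -/
def lamN : ℕ → Rw B C R → Rw B C R
  | 0, ρ => ρ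
  | n+1, ρ => .lam (lamN n ρ)

/-- Iterated application. -/
def apps : Rw B C R → List (Rw B C R) → Rw B C R
  | ρ, [] => ρ
  | ρ, σ :: σs => apps (.app ρ σ) σs

end Rw

/-- Coercion of a term to the (unit/empty) rewrite it denotes. -/
def Tm.toRw : Tm B C → Rw B C R
  | .var n => .var n
  | .const c => .const c
  | .lam t => .lam (toRw t)
  | .app t u => .app (toRw t) (toRw u)

/-- Higher-Order Rewriting Logic: `Γ ⊢ ρ : s → t : A`. -/
inductive RwTy (S : HRS B C R) : List (Ty B) → Rw B C R → Tm B C → Tm B C → Ty B → Prop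
  | var : Γ[n]? = some A → RwTy S Γ (.var n) (.var n) (.var n) A
  | const : RwTy S Γ (.const c) (.const c) (.const c) (S.sig c)
  | rule : RwTy S Γ (.rule r) (S.lhs r) (S.rhs r) (S.ruleTy r)
  | abs : RwTy S (A :: Γ) ρ s t B' → RwTy S Γ (.lam ρ) (.lam s) (.lam t) (.arrow A B')
  | app : RwTy S Γ ρ s₀ s₁ (.arrow A B') → RwTy S Γ σ t₀ t₁ A →
      RwTy S Γ (.app ρ σ) (.app s₀ t₀) (.app s₁ t₁) B'
  | comp : RwTy S Γ ρ s₀ s₁ A → RwTy S Γ σ s₁ s₂ A → RwTy S Γ (.comp ρ σ) s₀ s₂ A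
  | conv : RwTy S Γ ρ s' t' A → TmEq S.sig Γ s s' A → TmEq S.sig Γ t' t A →
      RwTy S Γ ρ s t A

/-- A rewrite is well-typed (typable) if it has some typing judgment. -/
def WT (S : HRS B C R) (ρ : Rw B C R) : Prop := ∃ Γ s t A, RwTy S Γ ρ s t A

/-- Permutation equivalence `ρ ≈ σ` of rewrites: the reflexive, symmetric,
transitive, contextual closure of the axioms IdL, IdR, Assoc, Abs, App,
BetaTR, BetaRT and Eta, each applying only between well-typed rewrites. -/
inductive PermEq (S : HRS B C R) : Rw B C R → Rw B C R → Prop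
  | idL : WT S (.comp (Tm.toRw (Rw.src S ρ)) ρ) → WT S ρ →
      PermEq S (.comp (Tm.toRw (Rw.src S ρ)) ρ) ρ
  | idR : WT S (.comp ρ (Tm.toRw (Rw.tgt S ρ))) → WT S ρ →
      PermEq S (.comp ρ (Tm.toRw (Rw.tgt S ρ))) ρ
  | assoc : WT S (.comp (.comp ρ σ) τ) → WT S (.comp ρ (.comp σ τ)) →
      PermEq S (.comp (.comp ρ σ) τ) (.comp ρ (.comp σ τ))
  | abs : WT S (.comp (.lam ρ) (.lam σ)) → WT S (.lam (.comp ρ σ)) →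
      PermEq S (.comp (.lam ρ) (.lam σ)) (.lam (.comp ρ σ))
  | app : WT S (.comp (.app ρ₁ ρ₂) (.app σ₁ σ₂)) → WT S (.app (.comp ρ₁ σ₁) (.comp ρ₂ σ₂)) →
      PermEq S (.comp (.app ρ₁ ρ₂) (.app σ₁ σ₂)) (.app (.comp ρ₁ σ₁) (.comp ρ₂ σ₂))
  | betaTR : WT S (.app (.lam (Tm.toRw s)) ρ) → WT S (Rw.substR (Tm.toRw s) 0 ρ) →
      PermEq S (.app (.lam (Tm.toRw s)) ρ) (Rw.substR (Tm.toRw s) 0 ρ)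
  | betaRT : WT S (.app (.lam ρ) (Tm.toRw s)) → WT S (Rw.substR ρ 0 (Tm.toRw s)) →
      PermEq S (.app (.lam ρ) (Tm.toRw s)) (Rw.substR ρ 0 (Tm.toRw s))
  | eta : WT S (.lam (.app (Rw.shiftR 1 0 ρ) (.var 0))) → WT S ρ →
      PermEq S (.lam (.app (Rw.shiftR 1 0 ρ) (.var 0))) ρ
  | refl : WT S ρ → PermEq S ρ ρ
  | symm : PermEq S ρ σ → PermEq S σ ρ
  | trans : PermEq S ρ σ → PermEq S σ τ → PermEq S ρ τ
  | congLam : PermEq S ρ ρ' → PermEq S (.lam ρ) (.lam ρ')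
  | congAppL : PermEq S ρ ρ' → WT S σ → PermEq S (.app ρ σ) (.app ρ' σ)
  | congAppR : WT S ρ → PermEq S σ σ' → PermEq S (.app ρ σ) (.app ρ σ')
  | congCompL : PermEq S ρ ρ' → WT S σ → PermEq S (.comp ρ σ) (.comp ρ' σ)
  | congCompR : WT S ρ → PermEq S σ σ' → PermEq S (.comp ρ σ) (.comp ρ σ')

/-- Rewrite/rewrite substitution `ρ⟦x\σ⟧ := ρ{x\src(σ)} ; tgt(ρ)⟨x\σ⟩`. -/
def substRR (S : HRS B C R) (ρ : Rw B C R) (k : ℕ) (σ : Rw B C R) : Rw B C R :=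
  .comp (Rw.substR ρ k (Tm.toRw (Rw.src S σ))) (Rw.substR (Tm.toRw (Rw.tgt S ρ)) k σ)

/-- The rules of the flattening system `F`, closed under arbitrary contexts. -/
inductive FStepRaw (S : HRS B C R) : Rw B C R → Rw B C R → Prop
  | abs : FStepRaw S (.lam (.comp ρ σ)) (.comp (.lam ρ) (.lam σ))
  | app1 : Rw.IsMultistep μ →
      FStepRaw S (.app (.comp ρ σ) μ) (.comp (.app ρ (Tm.toRw (Rw.src S μ))) (.app σ μ))
  | app2 : Rw.IsMultistep μ →
      FStepRaw S (.app μ (.comp ρ σ)) (.comp (.app μ ρ) (.app (Tm.toRw (Rw.tgt S μ)) σ))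
  | app3 : FStepRaw S (.app (.comp ρ₁ ρ₂) (.comp σ₁ σ₂))
      (.comp (.app (.comp ρ₁ ρ₂) (Tm.toRw (Rw.src S σ₁)))
             (.app (Tm.toRw (Rw.tgt S ρ₂)) (.comp σ₁ σ₂)))
  | betaM : Rw.IsMultistep μ → Rw.IsMultistep ν →
      FStepRaw S (.app (.lam μ) ν) (Rw.substR μ 0 ν)
  | etaM : Rw.IsMultistep μ →
      FStepRaw S (.lam (.app (Rw.shiftR 1 0 μ) (.var 0))) μ
  | congLam : FStepRaw S ρ ρ' → FStepRaw S (.lam ρ) (.lam ρ')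
  | congAppL : FStepRaw S ρ ρ' → FStepRaw S (.app ρ σ) (.app ρ' σ)
  | congAppR : FStepRaw S σ σ' → FStepRaw S (.app ρ σ) (.app ρ σ')
  | congCompL : FStepRaw S ρ ρ' → FStepRaw S (.comp ρ σ) (.comp ρ' σ)
  | congCompR : FStepRaw S σ σ' → FStepRaw S (.comp ρ σ) (.comp ρ σ')

/-- A flattening step `ρ ↦ σ` (the system `F` is defined between typable rewrites). -/
def FStep (S : HRS B C R) (ρ σ : Rw B C R) : Prop := FStepRaw S ρ σ ∧ WT S ρ

/-- `↦`-normal forms. -/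
def FNormal (S : HRS B C R) (ρ : Rw B C R) : Prop := ∀ σ, ¬ FStep S ρ σ

/-- `ρ ↦* σ`. -/
def FStar (S : HRS B C R) : Rw B C R → Rw B C R → Prop := Relation.ReflTransGen (FStep S)

open Classical in
/-- `ρ♭`: the `↦`-normal form of `ρ` (when it exists; it is unique for
typable rewrites by strong normalization and confluence of `F`). -/
noncomputable def flatten (S : HRS B C R) (ρ : Rw B C R) : Rw B C R :=
  if h : ∃ σ, FStar S ρ σ ∧ FNormal S σ then h.choose else ρ

/-- Splitting `μ ⋗ μ₁;μ₂` of a multistep. -/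
inductive Split (S : HRS B C R) : Rw B C R → Rw B C R → Rw B C R → Prop
  | var : Split S (.var n) (.var n) (.var n)
  | const : Split S (.const c) (.const c) (.const c)
  | ruleL : Split S (.rule r) (.rule r) (Tm.toRw (S.rhs r))
  | ruleR : Split S (.rule r) (Tm.toRw (S.lhs r)) (.rule r)
  | abs : Split S μ μ₁ μ₂ → Split S (.lam μ) (.lam μ₁) (.lam μ₂)
  | app : Split S μ μ₁ μ₂ → Split S ν ν₁ ν₂ →
      Split S (.app μ ν) (.app μ₁ ν₁) (.app μ₂ ν₂)

/-- Flat permutation equivalence `ρ ∼ σ` between `↦`-normal rewrites: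
generated by associativity and the Perm axiom, closed under reflexivity,
symmetry, transitivity and composition contexts. -/
inductive FlatEq (S : HRS B C R) : Rw B C R → Rw B C R → Prop
  | assoc : FlatEq S (.comp (.comp ρ σ) τ) (.comp ρ (.comp σ τ))
  | perm : Rw.IsMultistep μ → FNormal S μ → Split S μ μ₁ μ₂ →
      FlatEq S μ (.comp (flatten S μ₁) (flatten S μ₂))
  | refl : FlatEq S ρ ρ
  | symm : FlatEq S ρ σ → FlatEq S σ ρ
  | trans : FlatEq S ρ σ → FlatEq S σ τ → FlatEq S ρ τ
  | congCompL : FlatEq S ρ ρ' → FlatEq S (.comp ρ σ) (.comp ρ' σ)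
  | congCompR : FlatEq S σ σ' → FlatEq S (.comp ρ σ) (.comp ρ σ')

/-- Weak projection `μ/ν ⇝ ξ` of coinitial multisteps. -/
inductive WProj (S : HRS B C R) : Rw B C R → Rw B C R → Rw B C R → Prop
  | var : WProj S (.var n) (.var n) (.var n)
  | const : WProj S (.const c) (.const c) (.const c)
  | rule : WProj S (.rule r) (.rule r) (Tm.toRw (S.rhs r))
  | ruleL : WProj S (.rule r) (Tm.toRw (S.lhs r)) (.rule r)
  | ruleR : WProj S (Tm.toRw (S.lhs r)) (.rule r) (Tm.toRw (S.rhs r))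
  | abs : WProj S μ ν ξ → WProj S (.lam μ) (.lam ν) (.lam ξ)
  | app : WProj S μ₁ ν₁ ξ₁ → WProj S μ₂ ν₂ ξ₂ →
      WProj S (.app μ₁ μ₂) (.app ν₁ ν₂) (.app ξ₁ ξ₂)

/-- Compatibility of coinitial multisteps: both are η-expanded β-normal
forms, except that heads may be sources of rules. -/
inductive Compat (S : HRS B C R) : Rw B C R → Rw B C R → Prop
  | cvar : ms.length = ns.length →
      (∀ (i : ℕ) (m n' : Rw B C R), ms[i]? = some m → ns[i]? = some n' → Compat S m n') →
      Compat S (Rw.lamN k (Rw.apps (.var v) ms)) (Rw.lamN k (Rw.apps (.var v) ns))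
  | ccon : ms.length = ns.length →
      (∀ (i : ℕ) (m n' : Rw B C R), ms[i]? = some m → ns[i]? = some n' → Compat S m n') →
      Compat S (Rw.lamN k (Rw.apps (.const c) ms)) (Rw.lamN k (Rw.apps (.const c) ns))
  | crule : ms.length = ns.length →
      (∀ (i : ℕ) (m n' : Rw B C R), ms[i]? = some m → ns[i]? = some n' → Compat S m n') →
      Compat S (Rw.lamN k (Rw.apps (.rule r) ms)) (Rw.lamN k (Rw.apps (.rule r) ns))
  | cruleL : ms.length = ns.length →
      (∀ (i : ℕ) (m n' : Rw B C R), ms[i]? = some m → ns[i]? = some n' → Compat S m n') →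
      Compat S (Rw.lamN k (Rw.apps (.rule r) ms)) (Rw.lamN k (Rw.apps (Tm.toRw (S.lhs r)) ns))
  | cruleR : ms.length = ns.length →
      (∀ (i : ℕ) (m n' : Rw B C R), ms[i]? = some m → ns[i]? = some n' → Compat S m n') →
      Compat S (Rw.lamN k (Rw.apps (Tm.toRw (S.lhs r)) ms)) (Rw.lamN k (Rw.apps (.rule r) ns))

open Classical in
/-- The projection operator `μ/ν` for coinitial multisteps. -/
noncomputable def mproj (S : HRS B C R) (μ ν : Rw B C R) : Rw B C R :=
  if h : ∃ p : Rw B C R × Rw B C R × Rw B C R,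
      flatten S p.1 = flatten S μ ∧ flatten S p.2.1 = flatten S ν ∧ WProj S p.1 p.2.1 p.2.2
  then flatten S h.choose.2.2 else μ

/-- Projection of a flat multistep over a coinitial flat rewrite. -/
noncomputable def proj1 (S : HRS B C R) : Rw B C R → Rw B C R → Rw B C R
  | μ, .comp ρ₁ ρ₂ => proj1 S (proj1 S μ ρ₁) ρ₂
  | μ, ν => mproj S μ ν

/-- Projection of a flat rewrite over a coinitial flat multistep. -/
noncomputable def proj2 (S : HRS B C R) : Rw B C R → Rw B C R → Rw B C R
  | .comp ρ₁ ρ₂, μ => .comp (proj2 S ρ₁ μ) (proj2 S ρ₂ (proj1 S μ ρ₁))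
  | ν, μ => mproj S ν μ

/-- Projection `ρ/σ` of a flat rewrite over a coinitial flat rewrite. -/
noncomputable def proj3 (S : HRS B C R) : Rw B C R → Rw B C R → Rw B C R
  | ρ, .comp σ₁ σ₂ => proj3 S (proj3 S ρ σ₁) σ₂
  | ρ, μ => proj2 S ρ μ

/-- Projection `ρ ⫽ σ := ρ♭ / σ♭` for arbitrary coinitial rewrites. -/
noncomputable def aproj (S : HRS B C R) (ρ σ : Rw B C R) : Rw B C R :=
  proj3 S (flatten S ρ) (flatten S σ)

/-- Flat rewrites: compositions of `↦`-normal (flat) multisteps. -/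
inductive IsFlat (S : HRS B C R) : Rw B C R → Prop
  | ms : Rw.IsMultistep μ → FNormal S μ → IsFlat S μ
  | comp : IsFlat S ρ → IsFlat S σ → IsFlat S (.comp ρ σ)

/-- The rewrite denoted by a sequential rewrite `μ₁;…;μₙ;s̄`. -/
def seqToRw (p : List (Rw B C R) × Tm B C) : Rw B C R :=
  p.1.foldr Rw.comp (Tm.toRw p.2)

/-- Well-formedness of a sequential rewrite: all components are flat multisteps. -/
def SeqOK (S : HRS B C R) (p : List (Rw B C R) × Tm B C) : Prop :=
  (∀ μ ∈ p.1, Rw.IsMultistep μ ∧ FNormal S μ) ∧ FNormal S (Tm.toRw p.2)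

/-- Empty multisteps: those containing no rule symbols, i.e. coerced terms. -/
def EmptyMs (μ : Rw B C R) : Prop := ∃ t : Tm B C, μ = Tm.toRw t

/-- The standardization relation `▷` on sequential rewrites. -/
inductive Std (S : HRS B C R) : List (Rw B C R) × Tm B C → List (Rw B C R) × Tm B C → Prop
  | del : Std S (Tm.toRw t :: l, s) (l, s)
  | pull : FlatEq S μ₁₂ (.comp μ₁ μ₂) → FlatEq S μ₂₃ (.comp μ₂ μ₃) → ¬ EmptyMs μ₂ →
      Std S (μ₁ :: μ₂₃ :: l, s) (μ₁₂ :: μ₃ :: l, s)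
  | cong : Std S (l, s) (l', s) → Std S (μ :: l, s) (μ :: l', s)

/-- Strong equivalence `ρ ≍ σ` of sequential rewrites: same length, same final
term, componentwise flat-permutation-equivalent multisteps. -/
def StrongEq (S : HRS B C R) (p q : List (Rw B C R) × Tm B C) : Prop :=
  p.2 = q.2 ∧ List.Forall₂ (FlatEq S) p.1 q.1

/-- An unfolding of a multistep `μ`: a sequential rewrite of non-empty
multisteps flat-permutation-equivalent to `μ`. -/
def Unfolding (S : HRS B C R) (μ : Rw B C R) (p : List (Rw B C R) × Tm B C) : Prop :=
  SeqOK S p ∧ (∀ ν ∈ p.1, ¬ EmptyMs ν) ∧ FlatEq S μ (seqToRw p)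

/-- The finiteness condition: the lengths of unfoldings of any multistep are bounded. -/
def FinCond (S : HRS B C R) : Prop :=
  ∀ μ : Rw B C R, Rw.IsMultistep μ → WT S μ → ∃ N, ∀ p, Unfolding S μ p → p.1.length ≤ N

section Statement14Aux

open Tm

variable {sig : C → Ty B}

theorem shift_shift_le (t : Tm B C) : ∀ d d' c c', c' ≤ c →
    shift d (c + d') (shift d' c' t) = shift d' c' (shift d c t) := by
  induction t with
  | var n =>
    intro d d' c c' h
    simp only [shift]
    split_ifs <;> simp only [shift] <;> split_ifs <;>
      first | rfl | (exfalso; omega) | (congr 1; omega)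
  | const k => intro _ _ _ _ _; rfl
  | lam t ih =>
    intro d d' c c' h
    simp only [shift]
    rw [show c + d' + 1 = (c+1) + d' by omega, ih _ _ _ _ (by omega)]
  | app t u iht ihu =>
    intro d d' c c' h
    simp only [shift, iht _ _ _ _ h, ihu _ _ _ _ h]

theorem shift_shift_merge (t : Tm B C) : ∀ d d' c c', c' ≤ c → c ≤ c' + d' →
    shift d c (shift d' c' t) = shift (d + d') c' t := by
  induction t with
  | var n =>
    intro d d' c c' h1 h2
    simp only [shift]
    split_ifs <;> simp only [shift] <;> split_ifs <;>
      first | rfl | (exfalso; omega) | (congr 1; omega)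
  | const k => intro _ _ _ _ _ _; rfl
  | lam t ih =>
    intro d d' c c' h1 h2
    simp only [shift]
    rw [ih _ _ _ _ (by omega) (by omega)]
  | app t u iht ihu =>
    intro d d' c c' h1 h2
    simp only [shift, iht _ _ _ _ h1 h2, ihu _ _ _ _ h1 h2]

theorem shift_subst_above (t : Tm B C) : ∀ (u : Tm B C) d c k, c ≤ k →
    (shift d c t).subst (k + d) u = shift d c (t.subst k u) := by
  induction t with
  | var n =>
    intro u d c k h
    by_cases hnk : n = k
    · subst hnk
      simp only [shift, if_neg (show ¬ n < c by omega), subst, eq_self_iff_true, if_true,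
        lt_self_iff_false, if_false]
      have := shift_shift_merge u d n c 0 (by omega) (by omega)
      rw [this]
      congr 1
      omega
    · simp only [shift, subst]
      split_ifs <;> simp only [shift, subst] <;> split_ifs <;>
        first | rfl | (exfalso; omega) | (congr 1; omega)
  | const k => intro _ _ _ _ _; rfl
  | lam t ih =>
    intro u d c k h
    simp only [shift, subst]
    rw [show k + d + 1 = (k+1) + d by omega, ih _ _ _ _ (by omega)]
  | app t s iht ihs =>
    intro u d c k h
    simp only [shift, subst, iht _ _ _ _ h, ihs _ _ _ _ h]

theorem subst_shift_cancel (t : Tm B C) : ∀ (u : Tm B C) d c k, c ≤ k → k < c + d →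
    (shift d c t).subst k u = shift (d-1) c t := by
  induction t with
  | var n =>
    intro u d c k h1 h2
    simp only [shift]
    split_ifs <;> simp only [subst] <;> split_ifs <;>
      first | rfl | (exfalso; omega) | (congr 1; omega)
  | const k => intro _ _ _ _ _ _; rfl
  | lam t ih =>
    intro u d c k h1 h2
    simp only [shift, subst]
    rw [ih _ _ _ _ (by omega) (by omega)]
  | app t s iht ihs =>
    intro u d c k h1 h2
    simp only [shift, subst, iht _ _ _ _ h1 h2, ihs _ _ _ _ h1 h2]

theorem shift_subst_comm (t : Tm B C) : ∀ (u : Tm B C) d c k, k ≤ c →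
    shift d c (t.subst k u) = (shift d (c+1) t).subst k (shift d (c-k) u) := by
  induction t with
  | var n =>
    intro u d c k h
    by_cases hnk : n = k
    · subst hnk
      simp only [subst, shift, eq_self_iff_true, if_true, lt_self_iff_false, if_false,
        if_pos (show n < c + 1 by omega)]
      have := shift_shift_le u d n (c - n) 0 (by omega)
      rw [show c - n + n = c by omega] at this
      rw [this]
    · simp only [shift, subst]
      split_ifs <;> simp only [shift, subst] <;> split_ifs <;>
        first | rfl | (exfalso; omega) | (congr 1; omega)
  | const k => intro _ _ _ _ _; rfl
  | lam t ih =>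
    intro u d c k h
    simp only [shift, subst]
    rw [ih _ _ _ _ (by omega), Nat.add_sub_add_right]
  | app t s iht ihs =>
    intro u d c k h
    simp only [shift, subst, iht _ _ _ _ h, ihs _ _ _ _ h]

theorem subst_subst (s : Tm B C) : ∀ (t u : Tm B C) j k, j ≤ k →
    (s.subst j t).subst k u = (s.subst (k+1) u).subst j (t.subst (k-j) u) := by
  induction s with
  | var n =>
    intro t u j k h
    by_cases h1 : n = j
    · subst h1
      simp only [subst, eq_self_iff_true, if_true, lt_self_iff_false, if_false,
        if_neg (show ¬ n = k + 1 by omega), if_neg (show ¬ k + 1 < n by omega)]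
      have := shift_subst_above t u n 0 (k - n) (by omega)
      rw [show k - n + n = k by omega] at this
      exact this
    · by_cases h2 : n = k + 1
      · subst h2
        simp only [subst, eq_self_iff_true, if_true, lt_self_iff_false, if_false,
          if_neg h1, if_pos (show j < k + 1 by omega)]
        rw [subst_shift_cancel u _ (k+1) 0 j (by omega) (by omega)]
        simp only [Nat.add_sub_cancel, eq_self_iff_true, if_true, lt_self_iff_false, if_false]
      · simp only [subst]
        split_ifs <;> simp only [subst] <;> split_ifs <;>
          first | rfl | (exfalso; omega) | (congr 1; omega)
  | const k => intro _ _ _ _ _; rfl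
  | lam s ih =>
    intro t u j k h
    simp only [subst]
    rw [ih _ _ _ _ (by omega), Nat.add_sub_add_right]
  | app s s' ih ih' =>
    intro t u j k h
    simp only [subst, ih _ _ _ _ h, ih' _ _ _ _ h]

theorem tmty_shift_aux {G : List (Ty B)} {t : Tm B C} {A : Ty B} (h : TmTy sig G t A) :
    ∀ Γ₁ Γ₂ (Δ : List (Ty B)), G = Γ₁ ++ Γ₂ →
      TmTy sig (Γ₁ ++ Δ ++ Γ₂) (shift Δ.length Γ₁.length t) A := by
  induction h with
  | @var Γ n A' hn =>
    intro Γ₁ Γ₂ Δ hG; subst hG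
    simp only [shift]
    split_ifs with hlt
    · refine TmTy.var ?_
      rw [List.getElem?_append, if_pos hlt] at hn
      rw [List.getElem?_append, if_pos (by simp only [List.length_append]; omega),
          List.getElem?_append, if_pos hlt]
      exact hn
    · refine TmTy.var ?_
      rw [List.getElem?_append, if_neg hlt] at hn
      rw [List.getElem?_append, if_neg (by simp only [List.length_append]; omega),
          show n + Δ.length - (Γ₁ ++ Δ).length = n - Γ₁.length by
            simp only [List.length_append]; omega]
      exact hn
  | const => intro Γ₁ Γ₂ Δ hG; exact TmTy.const
  | lam h ih =>
    intro Γ₁ Γ₂ Δ hG; subst hG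
    simp only [shift]
    exact TmTy.lam (ih (_ :: Γ₁) Γ₂ Δ rfl)
  | app h1 h2 ih1 ih2 =>
    intro Γ₁ Γ₂ Δ hG; subst hG
    simp only [shift]
    exact TmTy.app (ih1 Γ₁ Γ₂ Δ rfl) (ih2 Γ₁ Γ₂ Δ rfl)

theorem tm_shift_id {Γ : List (Ty B)} {t : Tm B C} {A : Ty B} (h : TmTy sig Γ t A) :
    ∀ d c, Γ.length ≤ c → shift d c t = t := by
  induction h with
  | var hn =>
    intro d c hc
    have := (List.getElem?_eq_some_iff.mp hn).1
    simp only [shift]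
    rw [if_pos (by omega)]
  | const => intro _ _ _; rfl
  | lam h ih =>
    intro d c hc
    simp only [shift]
    rw [ih d (c+1) (by simp only [List.length_cons]; omega)]
  | app h1 h2 ih1 ih2 =>
    intro d c hc
    simp only [shift]
    rw [ih1 d c hc, ih2 d c hc]

theorem tm_subst_id {Γ : List (Ty B)} {t : Tm B C} {A : Ty B} (h : TmTy sig Γ t A) :
    ∀ (u : Tm B C) k, Γ.length ≤ k → t.subst k u = t := by
  induction h with
  | var hn =>
    intro u k hk
    have := (List.getElem?_eq_some_iff.mp hn).1
    simp only [subst]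
    rw [if_neg (by omega), if_neg (by omega)]
  | const => intro _ _ _; rfl
  | lam h ih =>
    intro u k hk
    simp only [subst]
    rw [ih u (k+1) (by simp only [List.length_cons]; omega)]
  | app h1 h2 ih1 ih2 =>
    intro u k hk
    simp only [subst]
    rw [ih1 u k hk, ih2 u k hk]

theorem tmty_subst_aux {G : List (Ty B)} {t : Tm B C} {B'} (h : TmTy sig G t B') :
    ∀ Γ₁ Γ₂ (A : Ty B) (u : Tm B C), G = Γ₁ ++ A :: Γ₂ → TmTy sig Γ₂ u A →
      TmTy sig (Γ₁ ++ Γ₂) (t.subst Γ₁.length u) B' := by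
  induction h with
  | @var Γ n A' hn =>
    intro Γ₁ Γ₂ A u hG hu; subst hG
    simp only [subst]
    split_ifs with h1 h2
    · subst h1
      rw [List.getElem?_append, if_neg (by omega), Nat.sub_self] at hn
      simp only [List.getElem?_cons_zero, Option.some.injEq] at hn
      subst hn
      exact tmty_shift_aux hu [] Γ₂ Γ₁ rfl
    · refine TmTy.var ?_
      rw [List.getElem?_append, if_neg (by omega)] at hn
      rw [show n - Γ₁.length = (n - Γ₁.length - 1) + 1 by omega] at hn
      simp only [List.getElem?_cons_succ] at hn
      rw [List.getElem?_append, if_neg (by omega),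
          show n - 1 - Γ₁.length = n - Γ₁.length - 1 by omega]
      exact hn
    · refine TmTy.var ?_
      rw [List.getElem?_append, if_pos (by omega)] at hn
      rw [List.getElem?_append, if_pos (by omega)]
      exact hn
  | const => intro Γ₁ Γ₂ A u hG hu; exact TmTy.const
  | lam h ih =>
    intro Γ₁ Γ₂ A u hG hu; subst hG
    simp only [subst]
    exact TmTy.lam (ih (_ :: Γ₁) Γ₂ A u rfl hu)
  | app h1 h2 ih1 ih2 =>
    intro Γ₁ Γ₂ A u hG hu; subst hG
    simp only [subst]
    exact TmTy.app (ih1 Γ₁ Γ₂ A u rfl hu) (ih2 Γ₁ Γ₂ A u rfl hu)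

theorem tmeq_shift_aux {G : List (Ty B)} {s t : Tm B C} {A : Ty B} (h : TmEq sig G s t A) :
    ∀ Γ₁ Γ₂ (Δ : List (Ty B)), G = Γ₁ ++ Γ₂ →
      TmEq sig (Γ₁ ++ Δ ++ Γ₂) (shift Δ.length Γ₁.length s) (shift Δ.length Γ₁.length t) A := by
  induction h with
  | beta hs ht =>
    intro Γ₁ Γ₂ Δ hG; subst hG
    simp only [shift]
    rw [shift_subst_comm _ _ _ _ _ (Nat.zero_le _), Nat.sub_zero]
    exact TmEq.beta (tmty_shift_aux hs (_ :: Γ₁) Γ₂ Δ rfl) (tmty_shift_aux ht Γ₁ Γ₂ Δ rfl)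
  | eta hs =>
    intro Γ₁ Γ₂ Δ hG; subst hG
    simp only [shift, if_pos (Nat.zero_lt_succ _)]
    rw [shift_shift_le _ _ _ _ _ (Nat.zero_le _)]
    exact TmEq.eta (tmty_shift_aux hs Γ₁ Γ₂ Δ rfl)
  | refl hs =>
    intro Γ₁ Γ₂ Δ hG; subst hG
    exact TmEq.refl (tmty_shift_aux hs Γ₁ Γ₂ Δ rfl)
  | symm h ih => intro Γ₁ Γ₂ Δ hG; exact (ih Γ₁ Γ₂ Δ hG).symm
  | trans h1 h2 ih1 ih2 =>
    intro Γ₁ Γ₂ Δ hG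
    exact (ih1 Γ₁ Γ₂ Δ hG).trans (ih2 Γ₁ Γ₂ Δ hG)
  | congAbs h ih =>
    intro Γ₁ Γ₂ Δ hG; subst hG
    simp only [shift]
    exact TmEq.congAbs (ih (_ :: Γ₁) Γ₂ Δ rfl)
  | congApp h1 h2 ih1 ih2 =>
    intro Γ₁ Γ₂ Δ hG; subst hG
    simp only [shift]
    exact TmEq.congApp (ih1 Γ₁ Γ₂ Δ rfl) (ih2 Γ₁ Γ₂ Δ rfl)

theorem tmeq_subst_aux {G : List (Ty B)} {s t : Tm B C} {B'} (h : TmEq sig G s t B') :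
    ∀ Γ₁ Γ₂ (A : Ty B) (u : Tm B C), G = Γ₁ ++ A :: Γ₂ → TmTy sig Γ₂ u A →
      TmEq sig (Γ₁ ++ Γ₂) (s.subst Γ₁.length u) (t.subst Γ₁.length u) B' := by
  induction h with
  | beta hs ht =>
    intro Γ₁ Γ₂ A u hG hu; subst hG
    simp only [subst]
    rw [subst_subst _ _ _ _ _ (Nat.zero_le _), Nat.sub_zero]
    exact TmEq.beta (tmty_subst_aux hs (_ :: Γ₁) Γ₂ A u rfl hu) (tmty_subst_aux ht Γ₁ Γ₂ A u rfl hu)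
  | eta hs =>
    intro Γ₁ Γ₂ A u hG hu; subst hG
    simp only [subst, if_neg (show ¬ (0 : ℕ) = Γ₁.length + 1 by omega),
      if_neg (show ¬ Γ₁.length + 1 < 0 by omega)]
    rw [shift_subst_above _ _ _ _ _ (Nat.zero_le _)]
    exact TmEq.eta (tmty_subst_aux hs Γ₁ Γ₂ A u rfl hu)
  | refl hs =>
    intro Γ₁ Γ₂ A u hG hu; subst hG
    exact TmEq.refl (tmty_subst_aux hs Γ₁ Γ₂ A u rfl hu)
  | symm h ih => intro Γ₁ Γ₂ A u hG hu; exact (ih Γ₁ Γ₂ A u hG hu).symm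
  | trans h1 h2 ih1 ih2 =>
    intro Γ₁ Γ₂ A u hG hu
    exact (ih1 Γ₁ Γ₂ A u hG hu).trans (ih2 Γ₁ Γ₂ A u hG hu)
  | congAbs h ih =>
    intro Γ₁ Γ₂ A u hG hu; subst hG
    simp only [subst]
    exact TmEq.congAbs (ih (_ :: Γ₁) Γ₂ A u rfl hu)
  | congApp h1 h2 ih1 ih2 =>
    intro Γ₁ Γ₂ A u hG hu; subst hG
    simp only [subst]
    exact TmEq.congApp (ih1 Γ₁ Γ₂ A u rfl hu) (ih2 Γ₁ Γ₂ A u rfl hu)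

mutual
theorem longnf_tmty {sg : C → Ty B} {Γ : List (Ty B)} {t : Tm B C} {A : Ty B} :
    LongNF sg Γ t A → TmTy sg Γ t A
  | .lam h => TmTy.lam (longnf_tmty h)
  | .neutral h => neutralnf_tmty h
theorem neutralnf_tmty {sg : C → Ty B} {Γ : List (Ty B)} {t : Tm B C} {A : Ty B} :
    NeutralNF sg Γ t A → TmTy sg Γ t A
  | .var h => TmTy.var h
  | .const => TmTy.const
  | .app h1 h2 => TmTy.app (neutralnf_tmty h1) (longnf_tmty h2)
end

theorem closed_weaken {t : Tm B C} {A : Ty B} (h : TmTy sig [] t A) (Γ : List (Ty B)) :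
    TmTy sig Γ t A := by
  have h2 := tmty_shift_aux h [] [] Γ rfl
  rw [tm_shift_id h Γ.length _ (Nat.zero_le _)] at h2
  simpa using h2

theorem lhs_ty (S : HRS B C R) (r : R) (Γ : List (Ty B)) :
    TmTy S.sig Γ (S.lhs r) (S.ruleTy r) :=
  closed_weaken (longnf_tmty (S.lhs_nf r)) Γ

theorem rhs_ty (S : HRS B C R) (r : R) (Γ : List (Ty B)) :
    TmTy S.sig Γ (S.rhs r) (S.ruleTy r) :=
  closed_weaken (longnf_tmty (S.rhs_nf r)) Γ

theorem toRw_shift (t : Tm B C) : ∀ d c,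
    (Tm.toRw (shift d c t) : Rw B C R) = Rw.shiftR d c (Tm.toRw t) := by
  induction t with
  | var n => intro d c; simp only [shift, Tm.toRw, Rw.shiftR]; split_ifs <;> rfl
  | const k => intro _ _; rfl
  | lam t ih => intro d c; simp only [shift, Tm.toRw, Rw.shiftR, ih]
  | app t u ih ih2 => intro d c; simp only [shift, Tm.toRw, Rw.shiftR, ih, ih2]

theorem src_toRw (S : HRS B C R) (t : Tm B C) : Rw.src S (Tm.toRw t) = t := by
  induction t <;> simp only [Tm.toRw, Rw.src, *]

theorem tgt_toRw (S : HRS B C R) (t : Tm B C) : Rw.tgt S (Tm.toRw t) = t := by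
  induction t <;> simp only [Tm.toRw, Rw.tgt, *]

theorem toRw_rwty {S : HRS B C R} {Γ : List (Ty B)} {t : Tm B C} {A : Ty B}
    (h : TmTy S.sig Γ t A) : RwTy S Γ (Tm.toRw t) t t A := by
  induction h with
  | var hn => exact RwTy.var hn
  | const => exact RwTy.const
  | lam h ih => exact RwTy.abs ih
  | app h1 h2 ih1 ih2 => exact RwTy.app ih1 ih2

theorem rwty_shift_aux {S : HRS B C R} {G : List (Ty B)} {ρ : Rw B C R} {s t A}
    (h : RwTy S G ρ s t A) :
    ∀ Γ₁ Γ₂ (Δ : List (Ty B)), G = Γ₁ ++ Γ₂ →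
      RwTy S (Γ₁ ++ Δ ++ Γ₂) (Rw.shiftR Δ.length Γ₁.length ρ)
        (shift Δ.length Γ₁.length s) (shift Δ.length Γ₁.length t) A := by
  induction h with
  | @var Γ n A' hn =>
    intro Γ₁ Γ₂ Δ hG; subst hG
    simp only [shift, Rw.shiftR]
    split_ifs with hlt
    · refine RwTy.var ?_
      rw [List.getElem?_append, if_pos hlt] at hn
      rw [List.getElem?_append, if_pos (by simp only [List.length_append]; omega),
          List.getElem?_append, if_pos hlt]
      exact hn
    · refine RwTy.var ?_
      rw [List.getElem?_append, if_neg hlt] at hn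
      rw [List.getElem?_append, if_neg (by simp only [List.length_append]; omega),
          show n + Δ.length - (Γ₁ ++ Δ).length = n - Γ₁.length by
            simp only [List.length_append]; omega]
      exact hn
  | const => intro Γ₁ Γ₂ Δ hG; exact RwTy.const
  | rule =>
    intro Γ₁ Γ₂ Δ hG
    simp only [Rw.shiftR]
    rw [tm_shift_id (lhs_ty S _ []) _ _ (Nat.zero_le _),
        tm_shift_id (rhs_ty S _ []) _ _ (Nat.zero_le _)]
    exact RwTy.rule
  | abs h ih =>
    intro Γ₁ Γ₂ Δ hG; subst hG
    simp only [shift, Rw.shiftR]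
    exact RwTy.abs (ih (_ :: Γ₁) Γ₂ Δ rfl)
  | app h1 h2 ih1 ih2 =>
    intro Γ₁ Γ₂ Δ hG; subst hG
    simp only [shift, Rw.shiftR]
    exact RwTy.app (ih1 Γ₁ Γ₂ Δ rfl) (ih2 Γ₁ Γ₂ Δ rfl)
  | comp h1 h2 ih1 ih2 =>
    intro Γ₁ Γ₂ Δ hG; subst hG
    simp only [Rw.shiftR]
    exact RwTy.comp (ih1 Γ₁ Γ₂ Δ rfl) (ih2 Γ₁ Γ₂ Δ rfl)
  | conv h he1 he2 ih =>
    intro Γ₁ Γ₂ Δ hG; subst hG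
    exact RwTy.conv (ih Γ₁ Γ₂ Δ rfl) (tmeq_shift_aux he1 Γ₁ Γ₂ Δ rfl)
      (tmeq_shift_aux he2 Γ₁ Γ₂ Δ rfl)

theorem rwty_substT_aux {S : HRS B C R} {G : List (Ty B)} {ρ : Rw B C R} {s t B'}
    (h : RwTy S G ρ s t B') :
    ∀ Γ₁ Γ₂ (A : Ty B) (u : Tm B C), G = Γ₁ ++ A :: Γ₂ → TmTy S.sig Γ₂ u A →
      RwTy S (Γ₁ ++ Γ₂) (Rw.substR ρ Γ₁.length (Tm.toRw u))
        (s.subst Γ₁.length u) (t.subst Γ₁.length u) B' := by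
  induction h with
  | @var Γ n A' hn =>
    intro Γ₁ Γ₂ A u hG hu; subst hG
    simp only [subst, Rw.substR]
    split_ifs with h1 h2
    · subst h1
      rw [List.getElem?_append, if_neg (by omega), Nat.sub_self] at hn
      simp only [List.getElem?_cons_zero, Option.some.injEq] at hn
      subst hn
      rw [← toRw_shift]
      exact toRw_rwty (tmty_shift_aux hu [] Γ₂ Γ₁ rfl)
    · refine RwTy.var ?_
      rw [List.getElem?_append, if_neg (by omega)] at hn
      rw [show n - Γ₁.length = (n - Γ₁.length - 1) + 1 by omega] at hn
      simp only [List.getElem?_cons_succ] at hn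
      rw [List.getElem?_append, if_neg (by omega),
          show n - 1 - Γ₁.length = n - Γ₁.length - 1 by omega]
      exact hn
    · refine RwTy.var ?_
      rw [List.getElem?_append, if_pos (by omega)] at hn
      rw [List.getElem?_append, if_pos (by omega)]
      exact hn
  | const => intro Γ₁ Γ₂ A u hG hu; exact RwTy.const
  | rule =>
    intro Γ₁ Γ₂ A u hG hu
    simp only [Rw.substR]
    rw [tm_subst_id (lhs_ty S _ []) _ _ (Nat.zero_le _),
        tm_subst_id (rhs_ty S _ []) _ _ (Nat.zero_le _)]
    exact RwTy.rule
  | abs h ih =>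
    intro Γ₁ Γ₂ A u hG hu; subst hG
    simp only [subst, Rw.substR]
    exact RwTy.abs (ih (_ :: Γ₁) Γ₂ A u rfl hu)
  | app h1 h2 ih1 ih2 =>
    intro Γ₁ Γ₂ A u hG hu; subst hG
    simp only [subst, Rw.substR]
    exact RwTy.app (ih1 Γ₁ Γ₂ A u rfl hu) (ih2 Γ₁ Γ₂ A u rfl hu)
  | comp h1 h2 ih1 ih2 =>
    intro Γ₁ Γ₂ A u hG hu; subst hG
    simp only [Rw.substR]
    exact RwTy.comp (ih1 Γ₁ Γ₂ A u rfl hu) (ih2 Γ₁ Γ₂ A u rfl hu)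
  | conv h he1 he2 ih =>
    intro Γ₁ Γ₂ A u hG hu; subst hG
    exact RwTy.conv (ih Γ₁ Γ₂ A u rfl hu) (tmeq_subst_aux he1 Γ₁ Γ₂ A u rfl hu)
      (tmeq_subst_aux he2 Γ₁ Γ₂ A u rfl hu)

theorem rwty_substR_aux {S : HRS B C R} {G : List (Ty B)} {s : Tm B C} {B'}
    (h : TmTy S.sig G s B') :
    ∀ Γ₁ Γ₂ (A : Ty B) (σ : Rw B C R) (q₀ q₁ : Tm B C), G = Γ₁ ++ A :: Γ₂ →
      RwTy S Γ₂ σ q₀ q₁ A →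
      RwTy S (Γ₁ ++ Γ₂) (Rw.substR (Tm.toRw s) Γ₁.length σ)
        (s.subst Γ₁.length q₀) (s.subst Γ₁.length q₁) B' := by
  induction h with
  | @var Γ n A' hn =>
    intro Γ₁ Γ₂ A σ q₀ q₁ hG hσ; subst hG
    simp only [subst, Tm.toRw, Rw.substR]
    split_ifs with h1 h2
    · subst h1
      rw [List.getElem?_append, if_neg (by omega), Nat.sub_self] at hn
      simp only [List.getElem?_cons_zero, Option.some.injEq] at hn
      subst hn
      exact rwty_shift_aux hσ [] Γ₂ Γ₁ rfl
    · refine RwTy.var ?_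
      rw [List.getElem?_append, if_neg (by omega)] at hn
      rw [show n - Γ₁.length = (n - Γ₁.length - 1) + 1 by omega] at hn
      simp only [List.getElem?_cons_succ] at hn
      rw [List.getElem?_append, if_neg (by omega),
          show n - 1 - Γ₁.length = n - Γ₁.length - 1 by omega]
      exact hn
    · refine RwTy.var ?_
      rw [List.getElem?_append, if_pos (by omega)] at hn
      rw [List.getElem?_append, if_pos (by omega)]
      exact hn
  | const => intro Γ₁ Γ₂ A σ q₀ q₁ hG hσ; exact RwTy.const
  | lam h ih =>
    intro Γ₁ Γ₂ A σ q₀ q₁ hG hσ; subst hG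
    simp only [subst, Tm.toRw, Rw.substR]
    exact RwTy.abs (ih (_ :: Γ₁) Γ₂ A σ q₀ q₁ rfl hσ)
  | app h1 h2 ih1 ih2 =>
    intro Γ₁ Γ₂ A σ q₀ q₁ hG hσ; subst hG
    simp only [subst, Tm.toRw, Rw.substR]
    exact RwTy.app (ih1 Γ₁ Γ₂ A σ q₀ q₁ rfl hσ) (ih2 Γ₁ Γ₂ A σ q₀ q₁ rfl hσ)

theorem rwty_canon {S : HRS B C R} {Γ : List (Ty B)} {ρ : Rw B C R} {s t A}
    (h : RwTy S Γ ρ s t A) :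
    TmTy S.sig Γ (Rw.src S ρ) A ∧ TmTy S.sig Γ (Rw.tgt S ρ) A ∧
    TmEq S.sig Γ s (Rw.src S ρ) A ∧ TmEq S.sig Γ (Rw.tgt S ρ) t A ∧
    RwTy S Γ ρ (Rw.src S ρ) (Rw.tgt S ρ) A := by
  induction h with
  | var hn =>
    exact ⟨.var hn, .var hn, .refl (.var hn), .refl (.var hn), .var hn⟩
  | const => exact ⟨.const, .const, .refl .const, .refl .const, .const⟩
  | rule =>
    exact ⟨lhs_ty S _ _, rhs_ty S _ _, .refl (lhs_ty S _ _), .refl (rhs_ty S _ _), .rule⟩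
  | abs h ih =>
    obtain ⟨h1, h2, h3, h4, h5⟩ := ih
    simp only [Rw.src, Rw.tgt]
    exact ⟨.lam h1, .lam h2, .congAbs h3, .congAbs h4, .abs h5⟩
  | app h1 h2 ih1 ih2 =>
    obtain ⟨a1, a2, a3, a4, a5⟩ := ih1
    obtain ⟨b1, b2, b3, b4, b5⟩ := ih2
    simp only [Rw.src, Rw.tgt]
    exact ⟨.app a1 b1, .app a2 b2, .congApp a3 b3, .congApp a4 b4, .app a5 b5⟩
  | comp h1 h2 ih1 ih2 =>
    obtain ⟨a1, a2, a3, a4, a5⟩ := ih1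
    obtain ⟨b1, b2, b3, b4, b5⟩ := ih2
    simp only [Rw.src, Rw.tgt]
    exact ⟨a1, b2, a3, b4, .comp a5 (.conv b5 (a4.trans b3) (.refl b2))⟩
  | conv h he1 he2 ih =>
    obtain ⟨a1, a2, a3, a4, a5⟩ := ih
    exact ⟨a1, a2, he1.trans a3, a4.trans he2, a5⟩

theorem wt_of {S : HRS B C R} {Γ : List (Ty B)} {ρ : Rw B C R} {s t A}
    (h : RwTy S Γ ρ s t A) : WT S ρ := ⟨Γ, s, t, A, h⟩

theorem rwty_substRR_gen {S : HRS B C R} {Γ₁ Γ₂ : List (Ty B)} {A B' : Ty B}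
    {ρ σ : Rw B C R} {s₀ s₁ q₀ q₁ : Tm B C}
    (hρ : RwTy S (Γ₁ ++ A :: Γ₂) ρ s₀ s₁ B') (hσ : RwTy S Γ₂ σ q₀ q₁ A) :
    RwTy S (Γ₁ ++ Γ₂) (substRR S ρ Γ₁.length σ)
      ((Rw.src S ρ).subst Γ₁.length (Rw.src S σ))
      ((Rw.tgt S ρ).subst Γ₁.length (Rw.tgt S σ)) B' := by
  obtain ⟨hs1, ht1, _, _, c1⟩ := rwty_canon hρ
  obtain ⟨hs2, ht2, _, _, c2⟩ := rwty_canon hσ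
  exact RwTy.comp (rwty_substT_aux c1 Γ₁ Γ₂ A _ rfl hs2)
    (rwty_substR_aux ht1 Γ₁ Γ₂ A σ _ _ rfl c2)

theorem key_lemma {S : HRS B C R} {Γ : List (Ty B)} {A B' : Ty B} {ρ σ : Rw B C R}
    {s₀ s₁ q₀ q₁ : Tm B C}
    (hρ : RwTy S (A :: Γ) ρ s₀ s₁ B') (hσ : RwTy S Γ σ q₀ q₁ A) :
    PermEq S (.app (.lam ρ) σ) (substRR S ρ 0 σ) := by
  obtain ⟨hsρ, htρ, _, _, cρ⟩ := rwty_canon hρ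
  obtain ⟨hsσ, htσ, _, _, cσ⟩ := rwty_canon hσ
  have tLam : RwTy S Γ (.lam ρ) (.lam (Rw.src S ρ)) (.lam (Rw.tgt S ρ)) (.arrow A B') :=
    .abs cρ
  have tToU : RwTy S Γ (Tm.toRw (Rw.src S σ)) (Rw.src S σ) (Rw.src S σ) A := toRw_rwty hsσ
  have tToLamW : RwTy S Γ (Tm.toRw (Tm.lam (Rw.tgt S ρ)))
      (.lam (Rw.tgt S ρ)) (.lam (Rw.tgt S ρ)) (.arrow A B') := toRw_rwty (.lam htρ)
  have tCompR : RwTy S Γ (.comp (Tm.toRw (Rw.src S σ)) σ)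
      (Rw.src S σ) (Rw.tgt S σ) A := .comp tToU cσ
  have tCompL : RwTy S Γ (.comp (.lam ρ) (Tm.toRw (Tm.lam (Rw.tgt S ρ))))
      (.lam (Rw.src S ρ)) (.lam (Rw.tgt S ρ)) (.arrow A B') := .comp tLam tToLamW
  have tApp3 : RwTy S Γ (.app (.comp (.lam ρ) (Tm.toRw (Tm.lam (Rw.tgt S ρ))))
      (.comp (Tm.toRw (Rw.src S σ)) σ))
      (.app (.lam (Rw.src S ρ)) (Rw.src S σ)) (.app (.lam (Rw.tgt S ρ)) (Rw.tgt S σ)) B' :=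
    .app tCompL tCompR
  have tAppL : RwTy S Γ (.app (.lam ρ) (Tm.toRw (Rw.src S σ)))
      (.app (.lam (Rw.src S ρ)) (Rw.src S σ)) (.app (.lam (Rw.tgt S ρ)) (Rw.src S σ)) B' :=
    .app tLam tToU
  have tAppR : RwTy S Γ (.app (Tm.toRw (Tm.lam (Rw.tgt S ρ))) σ)
      (.app (.lam (Rw.tgt S ρ)) (Rw.src S σ)) (.app (.lam (Rw.tgt S ρ)) (Rw.tgt S σ)) B' :=
    .app tToLamW cσ
  have tCompApps : RwTy S Γ (.comp (.app (.lam ρ) (Tm.toRw (Rw.src S σ)))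
      (.app (Tm.toRw (Tm.lam (Rw.tgt S ρ))) σ))
      (.app (.lam (Rw.src S ρ)) (Rw.src S σ)) (.app (.lam (Rw.tgt S ρ)) (Rw.tgt S σ)) B' :=
    .comp tAppL tAppR
  have tSubT : RwTy S Γ (Rw.substR ρ 0 (Tm.toRw (Rw.src S σ)))
      ((Rw.src S ρ).subst 0 (Rw.src S σ)) ((Rw.tgt S ρ).subst 0 (Rw.src S σ)) B' :=
    rwty_substT_aux cρ [] Γ A _ rfl hsσ
  have tSubR : RwTy S Γ (Rw.substR (Tm.toRw (Rw.tgt S ρ)) 0 σ)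
      ((Rw.tgt S ρ).subst 0 (Rw.src S σ)) ((Rw.tgt S ρ).subst 0 (Rw.tgt S σ)) B' :=
    rwty_substR_aux htρ [] Γ A σ _ _ rfl cσ
  have tApp1 : RwTy S Γ (.app (.lam ρ) σ)
      (.app (.lam (Rw.src S ρ)) (Rw.src S σ)) (.app (.lam (Rw.tgt S ρ)) (Rw.tgt S σ)) B' :=
    .app tLam cσ
  have tApp2 : RwTy S Γ (.app (.lam ρ) (.comp (Tm.toRw (Rw.src S σ)) σ))
      (.app (.lam (Rw.src S ρ)) (Rw.src S σ)) (.app (.lam (Rw.tgt S ρ)) (Rw.tgt S σ)) B' :=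
    .app tLam tCompR
  have step1 : PermEq S (.app (.lam ρ) σ) (.app (.lam ρ) (.comp (Tm.toRw (Rw.src S σ)) σ)) :=
    .congAppR (wt_of tLam) (.symm (.idL (wt_of tCompR) (wt_of cσ)))
  have step2 : PermEq S (.app (.lam ρ) (.comp (Tm.toRw (Rw.src S σ)) σ))
      (.app (.comp (.lam ρ) (Tm.toRw (Tm.lam (Rw.tgt S ρ)))) (.comp (Tm.toRw (Rw.src S σ)) σ)) :=
    .congAppL (.symm (.idR (wt_of tCompL) (wt_of tLam))) (wt_of tCompR)
  have step3 : PermEq S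
      (.app (.comp (.lam ρ) (Tm.toRw (Tm.lam (Rw.tgt S ρ)))) (.comp (Tm.toRw (Rw.src S σ)) σ))
      (.comp (.app (.lam ρ) (Tm.toRw (Rw.src S σ))) (.app (Tm.toRw (Tm.lam (Rw.tgt S ρ))) σ)) :=
    .symm (.app (wt_of tCompApps) (wt_of tApp3))
  have step4 : PermEq S
      (.comp (.app (.lam ρ) (Tm.toRw (Rw.src S σ))) (.app (Tm.toRw (Tm.lam (Rw.tgt S ρ))) σ))
      (.comp (Rw.substR ρ 0 (Tm.toRw (Rw.src S σ))) (.app (Tm.toRw (Tm.lam (Rw.tgt S ρ))) σ)) :=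
    .congCompL (.betaRT (wt_of tAppL) (wt_of tSubT)) (wt_of tAppR)
  have step5 : PermEq S
      (.comp (Rw.substR ρ 0 (Tm.toRw (Rw.src S σ))) (.app (Tm.toRw (Tm.lam (Rw.tgt S ρ))) σ))
      (.comp (Rw.substR ρ 0 (Tm.toRw (Rw.src S σ))) (Rw.substR (Tm.toRw (Rw.tgt S ρ)) 0 σ)) :=
    .congCompR (wt_of tSubT) (.betaTR (wt_of tAppR) (wt_of tSubR))
  exact step1.trans (step2.trans (step3.trans (step4.trans step5)))

end Statement14Aux
end HOR

open HOR in
/-- recursive equations for rewrite/rewrite substitution up to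
permutation equivalence: it commutes with abstraction, application, and
composition. -/
theorem statement14 {B C R : Type} (S : HRS B C R) (hOrth : Orthogonal S) :
    (∀ (Γ : List (Ty B)) (A B' C' : Ty B) (σ ρ : Rw B C R) (q₀ q₁ s₀ s₁ : Tm B C),
      RwTy S Γ σ q₀ q₁ A → RwTy S (B' :: A :: Γ) ρ s₀ s₁ C' →
      PermEq S (substRR S (.lam ρ) 0 σ) (.lam (substRR S ρ 1 σ))) ∧
    (∀ (Γ : List (Ty B)) (A B' C' : Ty B) (σ ρ₁ ρ₂ : Rw B C R)
        (q₀ q₁ s₀ s₁ t₀ t₁ : Tm B C),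
      RwTy S Γ σ q₀ q₁ A → RwTy S (A :: Γ) ρ₁ s₀ s₁ (.arrow B' C') →
      RwTy S (A :: Γ) ρ₂ t₀ t₁ B' →
      PermEq S (substRR S (.app ρ₁ ρ₂) 0 σ)
               (.app (substRR S ρ₁ 0 σ) (substRR S ρ₂ 0 σ))) ∧
    (∀ (Γ : List (Ty B)) (A B' : Ty B) (ρ₁ ρ₂ σ₁ σ₂ : Rw B C R)
        (s₀ s₁ s₂ t₀ t₁ t₂ : Tm B C),
      RwTy S (A :: Γ) ρ₁ s₀ s₁ B' → RwTy S (A :: Γ) ρ₂ s₁ s₂ B' →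
      RwTy S Γ σ₁ t₀ t₁ A → RwTy S Γ σ₂ t₁ t₂ A →
      PermEq S (substRR S (.comp ρ₁ ρ₂) 0 (.comp σ₁ σ₂))
               (.comp (substRR S ρ₁ 0 σ₁) (substRR S ρ₂ 0 σ₂))) := by
  refine ⟨?_, ?_, ?_⟩
  · intro Γ A B' C' σ ρ q₀ q₁ s₀ s₁ hσ hρ
    obtain ⟨hsσ, htσ, _, _, cσ⟩ := rwty_canon hσ
    obtain ⟨hsρ, htρ, _, _, cρ⟩ := rwty_canon hρ
    have ta : RwTy S (B' :: Γ) (Rw.substR ρ 1 (Tm.toRw (Rw.src S σ)))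
        ((Rw.src S ρ).subst 1 (Rw.src S σ)) ((Rw.tgt S ρ).subst 1 (Rw.src S σ)) C' :=
      rwty_substT_aux cρ [B'] Γ A _ rfl hsσ
    have tb : RwTy S (B' :: Γ) (Rw.substR (Tm.toRw (Rw.tgt S ρ)) 1 σ)
        ((Rw.tgt S ρ).subst 1 (Rw.src S σ)) ((Rw.tgt S ρ).subst 1 (Rw.tgt S σ)) C' :=
      rwty_substR_aux htρ [B'] Γ A σ _ _ rfl cσ
    exact PermEq.abs (wt_of (RwTy.comp (.abs ta) (.abs tb)))
      (wt_of (RwTy.abs (.comp ta tb)))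
  · intro Γ A B' C' σ ρ₁ ρ₂ q₀ q₁ s₀ s₁ t₀ t₁ hσ hρ₁ hρ₂
    obtain ⟨hsσ, htσ, _, _, cσ⟩ := rwty_canon hσ
    obtain ⟨hs1, ht1, _, _, c1⟩ := rwty_canon hρ₁
    obtain ⟨hs2, ht2, _, _, c2⟩ := rwty_canon hρ₂
    have a1 : RwTy S Γ (Rw.substR ρ₁ 0 (Tm.toRw (Rw.src S σ)))
        ((Rw.src S ρ₁).subst 0 (Rw.src S σ)) ((Rw.tgt S ρ₁).subst 0 (Rw.src S σ))
        (.arrow B' C') := rwty_substT_aux c1 [] Γ A _ rfl hsσ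
    have a2 : RwTy S Γ (Rw.substR ρ₂ 0 (Tm.toRw (Rw.src S σ)))
        ((Rw.src S ρ₂).subst 0 (Rw.src S σ)) ((Rw.tgt S ρ₂).subst 0 (Rw.src S σ)) B' :=
      rwty_substT_aux c2 [] Γ A _ rfl hsσ
    have b1 : RwTy S Γ (Rw.substR (Tm.toRw (Rw.tgt S ρ₁)) 0 σ)
        ((Rw.tgt S ρ₁).subst 0 (Rw.src S σ)) ((Rw.tgt S ρ₁).subst 0 (Rw.tgt S σ))
        (.arrow B' C') := rwty_substR_aux ht1 [] Γ A σ _ _ rfl cσ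
    have b2 : RwTy S Γ (Rw.substR (Tm.toRw (Rw.tgt S ρ₂)) 0 σ)
        ((Rw.tgt S ρ₂).subst 0 (Rw.src S σ)) ((Rw.tgt S ρ₂).subst 0 (Rw.tgt S σ)) B' :=
      rwty_substR_aux ht2 [] Γ A σ _ _ rfl cσ
    exact PermEq.app (wt_of (RwTy.comp (.app a1 a2) (.app b1 b2)))
      (wt_of (RwTy.app (.comp a1 b1) (.comp a2 b2)))
  · intro Γ A B' ρ₁ ρ₂ σ₁ σ₂ s₀ s₁ s₂ t₀ t₁ t₂ hρ₁ hρ₂ hσ₁ hσ₂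
    have K0 := key_lemma (RwTy.comp hρ₁ hρ₂) (RwTy.comp hσ₁ hσ₂)
    have K1 := key_lemma hρ₁ hσ₁
    have K2 := key_lemma hρ₂ hσ₂
    obtain ⟨s1ρ, t1ρ, e1ρ, e2ρ, c1⟩ := rwty_canon hρ₁
    obtain ⟨s2ρ, t2ρ, e3ρ, e4ρ, c2⟩ := rwty_canon hρ₂
    obtain ⟨s1σ, t1σ, e1σ, e2σ, d1⟩ := rwty_canon hσ₁
    obtain ⟨s2σ, t2σ, e3σ, e4σ, d2⟩ := rwty_canon hσ₂
    have c2' : RwTy S (A :: Γ) ρ₂ (Rw.tgt S ρ₁) (Rw.tgt S ρ₂) B' :=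
      .conv c2 (e2ρ.trans e3ρ) (.refl t2ρ)
    have d2' : RwTy S Γ σ₂ (Rw.tgt S σ₁) (Rw.tgt S σ₂) A :=
      .conv d2 (e2σ.trans e3σ) (.refl t2σ)
    have tLam12 : RwTy S Γ (.lam (.comp ρ₁ ρ₂))
        (.lam (Rw.src S ρ₁)) (.lam (Rw.tgt S ρ₂)) (.arrow A B') :=
      .abs (.comp c1 c2')
    have tCompσ : RwTy S Γ (.comp σ₁ σ₂) (Rw.src S σ₁) (Rw.tgt S σ₂) A := .comp d1 d2'
    have tCompLam : RwTy S Γ (.comp (.lam ρ₁) (.lam ρ₂))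
        (.lam (Rw.src S ρ₁)) (.lam (Rw.tgt S ρ₂)) (.arrow A B') :=
      .comp (.abs c1) (.abs c2')
    have tA : RwTy S Γ (.app (.lam (.comp ρ₁ ρ₂)) (.comp σ₁ σ₂))
        (.app (.lam (Rw.src S ρ₁)) (Rw.src S σ₁)) (.app (.lam (Rw.tgt S ρ₂)) (Rw.tgt S σ₂))
        B' := .app tLam12 tCompσ
    have tB : RwTy S Γ (.app (.comp (.lam ρ₁) (.lam ρ₂)) (.comp σ₁ σ₂))
        (.app (.lam (Rw.src S ρ₁)) (Rw.src S σ₁)) (.app (.lam (Rw.tgt S ρ₂)) (Rw.tgt S σ₂))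
        B' := .app tCompLam tCompσ
    have tApp1 : RwTy S Γ (.app (.lam ρ₁) σ₁)
        (.app (.lam (Rw.src S ρ₁)) (Rw.src S σ₁)) (.app (.lam (Rw.tgt S ρ₁)) (Rw.tgt S σ₁))
        B' := .app (.abs c1) d1
    have tApp2 : RwTy S Γ (.app (.lam ρ₂) σ₂)
        (.app (.lam (Rw.src S ρ₂)) (Rw.src S σ₂)) (.app (.lam (Rw.tgt S ρ₂)) (Rw.tgt S σ₂))
        B' := .app (.abs c2) d2
    have tApp2' : RwTy S Γ (.app (.lam ρ₂) σ₂)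
        (.app (.lam (Rw.tgt S ρ₁)) (Rw.tgt S σ₁)) (.app (.lam (Rw.tgt S ρ₂)) (Rw.tgt S σ₂))
        B' :=
      .conv tApp2 (TmEq.congApp (TmEq.congAbs (e2ρ.trans e3ρ)) (e2σ.trans e3σ))
        (.refl (.app (.lam t2ρ) t2σ))
    have tC : RwTy S Γ (.comp (.app (.lam ρ₁) σ₁) (.app (.lam ρ₂) σ₂))
        (.app (.lam (Rw.src S ρ₁)) (Rw.src S σ₁)) (.app (.lam (Rw.tgt S ρ₂)) (Rw.tgt S σ₂))
        B' := .comp tApp1 tApp2'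
    have tSub1 : RwTy S Γ (substRR S ρ₁ 0 σ₁)
        ((Rw.src S ρ₁).subst 0 (Rw.src S σ₁)) ((Rw.tgt S ρ₁).subst 0 (Rw.tgt S σ₁)) B' :=
      rwty_substRR_gen (Γ₁ := []) hρ₁ hσ₁
    have step2 : PermEq S (.app (.lam (.comp ρ₁ ρ₂)) (.comp σ₁ σ₂))
        (.app (.comp (.lam ρ₁) (.lam ρ₂)) (.comp σ₁ σ₂)) :=
      .congAppL (.symm (.abs (wt_of tCompLam) (wt_of tLam12))) (wt_of tCompσ)
    have step3 : PermEq S (.app (.comp (.lam ρ₁) (.lam ρ₂)) (.comp σ₁ σ₂))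
        (.comp (.app (.lam ρ₁) σ₁) (.app (.lam ρ₂) σ₂)) :=
      .symm (.app (wt_of tC) (wt_of tB))
    have step4 : PermEq S (.comp (.app (.lam ρ₁) σ₁) (.app (.lam ρ₂) σ₂))
        (.comp (substRR S ρ₁ 0 σ₁) (.app (.lam ρ₂) σ₂)) :=
      .congCompL K1 (wt_of tApp2)
    have step5 : PermEq S (.comp (substRR S ρ₁ 0 σ₁) (.app (.lam ρ₂) σ₂))
        (.comp (substRR S ρ₁ 0 σ₁) (substRR S ρ₂ 0 σ₂)) :=
      .congCompR (wt_of tSub1) K2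
    exact (K0.symm).trans (step2.trans (step3.trans (step4.trans step5)))
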